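/- For each k with 1 ≤ k ≤ n−1, the element b_k := (σ_{k−1} ⋯ σ_2 σ_1)^{−k} (σ_{n−1} ⋯ σ_{k+2} σ_{k+1})^{n−k} of B_n satisfies b_k = d · (r_k r_{k−1} ⋯ r_1)^{−1} = (r_k r_{k−1} ⋯ r_1)^{−1} · d. -/

import Mathlib

namespace Braid

/-- Braid relations on generators indexed by `Fin m`; the generator `i : Fin m` stands for the
Artin generator `σ_{i+1}` of the braid group on `m+1` strands: the relations are
`σ_i σ_j = σ_j σ_i` for `|i-j| ≥ 2` and `σ_i σ_{i+1} σ_i = σ_{i+1} σ_i σ_{i+1}`. -/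
def braidRels (m : ℕ) : Set (FreeGroup (Fin m)) :=
  {r | ∃ i j : Fin m, i.val + 2 ≤ j.val ∧
      r = .of i * .of j * (.of j * .of i)⁻¹} ∪
  {r | ∃ (i : Fin m) (hij : i.val + 1 < m),
      r = .of i * .of ⟨i.val + 1, hij⟩ * .of i *
        (.of ⟨i.val + 1, hij⟩ * .of i * .of ⟨i.val + 1, hij⟩)⁻¹}

/-- The Artin braid group `B_n` on `n` strands, presented with generators `σ_1, …, σ_{n-1}`
and the braid relations. -/
def BraidGroup (n : ℕ) : Type := PresentedGroup (braidRels (n - 1))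

instance (n : ℕ) : Group (BraidGroup n) := by unfold BraidGroup; infer_instance

/-- The Artin generator `σ_i` of `B_n`, for `1 ≤ i ≤ n-1` (junk value `1` otherwise). -/
def σ (n : ℕ) (i : ℕ) : BraidGroup n :=
  if h : 1 ≤ i ∧ i ≤ n - 1 then PresentedGroup.of ⟨i - 1, by omega⟩ else 1

/-- The ascending product `σ_a σ_{a+1} ⋯ σ_b` (empty product if `b < a`). -/
def up (n a b : ℕ) : BraidGroup n := ((List.range' a (b + 1 - a)).map (σ n)).prod

/-- The descending product `σ_a σ_{a-1} ⋯ σ_b` (empty product if `a < b`). -/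
def down (n a b : ℕ) : BraidGroup n :=
  ((List.range' b (a + 1 - b)).reverse.map (σ n)).prod

/-- The full twist `d = (σ_{n-1} ⋯ σ_2 σ_1)^n` of `B_n`. -/
def fullTwist (n : ℕ) : BraidGroup n := (down n (n - 1) 1) ^ n

/-- The flip `r_i = σ_{i-1} ⋯ σ_2 σ_1^2 σ_2 ⋯ σ_{n-2} σ_{n-1}^2 σ_{n-2} ⋯ σ_i` of `B_n`
(for `1 ≤ i ≤ n`), written as `(σ_{i-1} ⋯ σ_1) (σ_1 ⋯ σ_{n-1}) (σ_{n-1} ⋯ σ_i)`. -/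
def flip (n i : ℕ) : BraidGroup n :=
  down n (i - 1) 1 * up n 1 (n - 1) * down n (n - 1) i

/-- The descending product of flips `r_a r_{a-1} ⋯ r_b` (empty product if `a < b`). -/
def flipsDown (n a b : ℕ) : BraidGroup n :=
  ((List.range' b (a + 1 - b)).reverse.map (flip n)).prod

/-- The subgroup `R_n ⊆ B_n` generated by the full twist `d` and the flips `r_1, …, r_n`. -/
def R (n : ℕ) : Subgroup (BraidGroup n) :=
  Subgroup.closure ({fullTwist n} ∪ flip n '' Set.Icc 1 n)

/-- The subgroup `R_n' ⊆ B_n` generated by the flips `r_1, …, r_n`. -/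
def R' (n : ℕ) : Subgroup (BraidGroup n) :=
  Subgroup.closure (flip n '' Set.Icc 1 n)

private lemma swap_braid {n : ℕ} (a b c : Fin n) (hab : a ≠ b) (hbc : b ≠ c) (hac : a ≠ c) :
    Equiv.swap a b * Equiv.swap b c * Equiv.swap a b
      = Equiv.swap b c * Equiv.swap a b * Equiv.swap b c := by
  have h1 : Equiv.swap b a * Equiv.swap c b * Equiv.swap b a = Equiv.swap a c :=
    Equiv.swap_mul_swap_mul_swap (Ne.symm hbc) hac.symm
  have h2 : Equiv.swap b c * Equiv.swap a b * Equiv.swap b c = Equiv.swap c a :=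
    Equiv.swap_mul_swap_mul_swap hab hac
  rw [h2, Equiv.swap_comm a b, Equiv.swap_comm b c, h1, Equiv.swap_comm a c]

private lemma swap_commute {n : ℕ} (a b c d : Fin n)
    (hac : a ≠ c) (had : a ≠ d) (hbc : b ≠ c) (hbd : b ≠ d) :
    Equiv.swap a b * Equiv.swap c d = Equiv.swap c d * Equiv.swap a b := by
  refine Equiv.Perm.Disjoint.commute ?_
  intro x
  by_cases h1 : x = a
  · subst h1; right; exact Equiv.swap_apply_of_ne_of_ne hac had
  · by_cases h2 : x = b
    · subst h2; right; exact Equiv.swap_apply_of_ne_of_ne hbc hbd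
    · left; exact Equiv.swap_apply_of_ne_of_ne h1 h2

/-- The transposition `(i, i+1)` of `Fin n` associated to the generator `i : Fin (n-1)`. -/
def permGen (n : ℕ) (i : Fin (n - 1)) : Equiv.Perm (Fin n) :=
  Equiv.swap ⟨i.val, by have := i.isLt; omega⟩ ⟨i.val + 1, by have := i.isLt; omega⟩

/-- The homomorphism `B_n → Sym(n)` sending `σ_i` to the transposition `(i, i+1)`. -/
def toPerm (n : ℕ) : BraidGroup n →* Equiv.Perm (Fin n) :=
  PresentedGroup.toGroup (f := permGen n)
    (by
      rintro r (⟨i, j, hij, rfl⟩ | ⟨i, hij, rfl⟩) <;>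
        simp only [map_mul, map_inv, FreeGroup.lift_apply_of, permGen] <;> rw [mul_inv_eq_one]
      · refine swap_commute _ _ _ _ ?_ ?_ ?_ ?_ <;>
          · rw [ne_eq, Fin.mk.injEq]; omega
      · refine swap_braid _ _ _ ?_ ?_ ?_ <;>
          · rw [ne_eq, Fin.mk.injEq]; omega)

/-- The pure braid group `P_n`: the kernel of `B_n → Sym(n)`, `σ_i ↦ (i, i+1)`. -/
def P (n : ℕ) : Subgroup (BraidGroup n) := (toPerm n).ker

private lemma mk_rel_eq_one {m : ℕ} {r : FreeGroup (Fin m)} (h : r ∈ braidRels m) :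
    PresentedGroup.mk (braidRels m) r = 1 :=
  (QuotientGroup.eq_one_iff _).mpr (Subgroup.subset_normalClosure h)

lemma σ_comm {n i j : ℕ} (h1 : 1 ≤ i) (h2 : i + 2 ≤ j) (h3 : j ≤ n - 1) :
    σ n i * σ n j = σ n j * σ n i := by
  erw [σ, σ, dif_pos ⟨h1, by omega⟩, dif_pos ⟨by omega, h3⟩]
  have hmem : (FreeGroup.of (⟨i - 1, by omega⟩ : Fin (n-1)) * .of ⟨j - 1, by omega⟩ *
      (.of ⟨j - 1, by omega⟩ * .of ⟨i - 1, by omega⟩)⁻¹) ∈ braidRels (n - 1) :=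
    Or.inl ⟨⟨i - 1, by omega⟩, ⟨j - 1, by omega⟩, by show i - 1 + 2 ≤ j - 1; omega, rfl⟩
  have h := mk_rel_eq_one hmem
  rw [map_mul, map_inv, mul_inv_eq_one, map_mul, map_mul] at h
  exact h

set_option maxHeartbeats 1600000 in
lemma σ_braid {n i : ℕ} (h1 : 1 ≤ i) (h2 : i + 1 ≤ n - 1) :
    σ n i * σ n (i + 1) * σ n i = σ n (i + 1) * σ n i * σ n (i + 1) := by
  erw [σ, σ, dif_pos ⟨h1, by omega⟩, dif_pos ⟨by omega, h2⟩]
  have key : (⟨i + 1 - 1, by omega⟩ : Fin (n - 1)) = ⟨(i - 1) + 1, by omega⟩ := by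
    rw [Fin.mk.injEq]; omega
  rw [key]
  have hmem : (FreeGroup.of (⟨i - 1, by omega⟩ : Fin (n-1)) * .of ⟨(i-1) + 1, by omega⟩ *
      .of ⟨i - 1, by omega⟩ *
      (.of ⟨(i-1) + 1, by omega⟩ * .of ⟨i - 1, by omega⟩ * .of ⟨(i-1)+1, by omega⟩)⁻¹)
      ∈ braidRels (n - 1) :=
    Or.inr ⟨⟨i - 1, by omega⟩, by show i - 1 + 1 < n - 1; omega, rfl⟩
  have h := mk_rel_eq_one hmem
  rw [map_mul, map_inv, mul_inv_eq_one, map_mul, map_mul, map_mul, map_mul] at h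
  exact h

/-- The canonical homomorphism `ι : B_{n-1} → B_n` determined by `σ_i ↦ σ_i`. -/
def ι (n : ℕ) : BraidGroup (n - 1) →* BraidGroup n :=
  PresentedGroup.toGroup (f := fun i : Fin (n - 1 - 1) => σ n (i.val + 1))
    (by
      rintro r (⟨i, j, hij, rfl⟩ | ⟨i, hij, rfl⟩) <;>
        simp only [map_mul, map_inv, FreeGroup.lift_apply_of] <;> rw [mul_inv_eq_one]
      · exact σ_comm (by omega) (by omega) (by have := j.isLt; omega)
      · exact σ_braid (by omega) (by have := i.isLt; omega))

/-!
Write `δ_b = σ_b ⋯ σ_1`. Conjugation by a descending product `σ_b ⋯ σ_a` lowers `σ_{j+1}` to `σ_j`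
for `a ≤ j < b`; together with one braid relation at an end of the range this gives the two
factorisations
`(σ_b ⋯ σ_a)^{k+1} = (σ_b ⋯ σ_{a+1})^{k+1} σ_a ⋯ σ_{a+k}` and
`(σ_{b+1} ⋯ σ_a)^{k+1} = σ_{b+1-k} ⋯ σ_{b+1} (σ_b ⋯ σ_a)^{k+1}`.
In `b_k r_k` the factor `(σ_{n-1} ⋯ σ_{k+1})^{n-k}` of `b_k` commutes past `δ_{k-1} σ_1 ⋯ σ_{k-1}`;
the first factorisation merges it with the tail `σ_k ⋯ σ_{n-1}` of `r_k` into
`(σ_{n-1} ⋯ σ_k)^{n-k}`, and the second turns `δ_{k-1}^{-k} δ_{k-1} σ_1 ⋯ σ_{k-1}` into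
`δ_{k-2}^{-(k-1)}`. Hence `b_k r_k = b_{k-1}`, and from `b_0 = d` induction gives
`b_k = d (r_k ⋯ r_1)⁻¹`. The second equality holds because `d` is central: writing
`d = δ_{n-1}^{n-1-j} δ_{n-1}^2 δ_{n-1}^{j-1}`, conjugation by `d` moves `σ_j` to `σ_1`, then to
`σ_{n-1}` (the braid relations give `δ_{n-1}^2 σ_1 = σ_{n-1} δ_{n-1}^2`), then back to `σ_j`.
-/

end Braid

theorem List.range'_append_range'_of_le {a b c : ℕ} (h₁ : a ≤ c + 1) (h₂ : c ≤ b) :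
    List.range' a (c + 1 - a) ++ List.range' (c + 1) (b - c) = List.range' a (b + 1 - a) := by
  have h := List.range'_append_1 (s := a) (m := c + 1 - a) (n := b - c)
  rwa [show a + (c + 1 - a) = c + 1 by omega, show c + 1 - a + (b - c) = b + 1 - a by omega] at h

theorem SemiconjBy.list_prod_map {α G : Type*} [Monoid G] {a : G} {f g : α → G} (l : List α)
    (h : ∀ i ∈ l, SemiconjBy a (f i) (g i)) :
    SemiconjBy a (l.map f).prod (l.map g).prod := by
  induction l with
  | nil => exact SemiconjBy.one_right a
  | cons i l ih =>
    simpa using (h i (by simp)).mul_right (ih fun j hj => h j (by simp [hj]))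

namespace Braid

section

variable {n : ℕ}

-- Outside `1 ≤ i ≤ n - 1` the junk value `σ n i = 1` makes bounds on `i, j` unnecessary.
lemma commute_σ_σ {i j : ℕ} (h : i + 2 ≤ j) : Commute (σ n i) (σ n j) := by
  by_cases hi : 1 ≤ i ∧ i ≤ n - 1
  · by_cases hj : 1 ≤ j ∧ j ≤ n - 1
    · exact σ_comm hi.1 h hj.2
    · simp [σ, hj]
  · simp [σ, hi]

lemma up_eq_one_of_lt {a b : ℕ} (h : b < a) : up n a b = 1 := by
  simp [up, Nat.sub_eq_zero_of_le h]

lemma down_self (a : ℕ) : down n a a = σ n a := by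
  simp [down]

lemma up_self (a : ℕ) : up n a a = σ n a := by
  simp [up]

lemma down_mul_down {a b c : ℕ} (h₁ : a ≤ c + 1) (h₂ : c ≤ b) :
    down n b (c + 1) * down n c a = down n b a := by
  simp only [down, ← List.range'_append_range'_of_le h₁ h₂, List.reverse_append, List.map_append,
    List.prod_append, show b + 1 - (c + 1) = b - c by omega]

lemma up_mul_up {a b c : ℕ} (h₁ : a ≤ c + 1) (h₂ : c ≤ b) :
    up n a c * up n (c + 1) b = up n a b := by
  simp only [up, ← List.range'_append_range'_of_le h₁ h₂, List.map_append, List.prod_append,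
    show b + 1 - (c + 1) = b - c by omega]

lemma σ_mul_down {a b : ℕ} (h : a ≤ b + 1) : σ n (b + 1) * down n b a = down n (b + 1) a := by
  simpa [down_self] using down_mul_down (n := n) h (Nat.le_succ b)

lemma down_add_one_mul_σ {a b : ℕ} (h : a ≤ b) : down n b (a + 1) * σ n a = down n b a := by
  simpa [down_self] using down_mul_down (n := n) (a := a) (b := b) (c := a) (by omega) h

lemma up_mul_σ_add_one {a b : ℕ} (h : a ≤ b + 1) : up n a b * σ n (b + 1) = up n a (b + 1) := by
  simpa [up_self] using up_mul_up (n := n) (c := b) h (Nat.le_succ b)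

lemma σ_mul_up_add_one {a b : ℕ} (h : a ≤ b) : σ n a * up n (a + 1) b = up n a b := by
  simpa [up_self] using up_mul_up (n := n) (a := a) (b := b) (c := a) (by omega) h

lemma commute_down {x : BraidGroup n} {a b : ℕ}
    (h : ∀ j, a ≤ j → j ≤ b → Commute x (σ n j)) : Commute x (down n b a) := by
  refine Commute.list_prod_right _ _ fun y hy => ?_
  obtain ⟨j, hj, rfl⟩ := List.mem_map.1 hy
  rw [List.mem_reverse, List.mem_range'_1] at hj
  exact h j hj.1 (by omega)

lemma commute_up {x : BraidGroup n} {a b : ℕ}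
    (h : ∀ j, a ≤ j → j ≤ b → Commute x (σ n j)) : Commute x (up n a b) := by
  refine Commute.list_prod_right _ _ fun y hy => ?_
  obtain ⟨j, hj, rfl⟩ := List.mem_map.1 hy
  rw [List.mem_range'_1] at hj
  exact h j hj.1 (by omega)

lemma semiconjBy_down_σ {a b j : ℕ} (ha : 1 ≤ a) (haj : a ≤ j) (hjb : j < b) (hb : b ≤ n - 1) :
    SemiconjBy (down n b a) (σ n (j + 1)) (σ n j) := by
  obtain ⟨i, rfl⟩ : ∃ i, j = i + 1 := ⟨j - 1, by omega⟩
  have hsplit : down n b (i + 1 + 1 + 1) * ((σ n (i + 1 + 1) * σ n (i + 1)) * down n i a)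
      = down n b a := by
    rw [mul_assoc, σ_mul_down (by omega), σ_mul_down (by omega),
      down_mul_down (c := i + 1 + 1) (by omega) (by omega)]
  have hX : Commute (down n b (i + 1 + 1 + 1)) (σ n (i + 1)) :=
    (commute_down fun k hk _ => commute_σ_σ (by omega)).symm
  have hY : Commute (down n i a) (σ n (i + 1 + 1)) :=
    (commute_down fun k _ hk => (commute_σ_σ (by omega)).symm).symm
  have hP : SemiconjBy (σ n (i + 1 + 1) * σ n (i + 1)) (σ n (i + 1 + 1)) (σ n (i + 1)) := by
    simp only [SemiconjBy, mul_assoc, ← σ_braid (n := n) (i := i + 1) (by omega) (by omega)]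
  rw [← hsplit]
  exact SemiconjBy.mul_left hX (hP.mul_left hY)

lemma semiconjBy_down_up {a b c d : ℕ} (ha : 1 ≤ a) (hac : a ≤ c) (hdb : d < b) (hb : b ≤ n - 1) :
    SemiconjBy (down n b a) (up n (c + 1) (d + 1)) (up n c d) := by
  have hshift :
      up n (c + 1) (d + 1) = ((List.range' c (d + 1 - c)).map (fun i => σ n (i + 1))).prod := by
    rw [up, show d + 1 + 1 - (c + 1) = d + 1 - c by omega, show c + 1 = 1 + c from Nat.add_comm _ _,
      ← List.map_add_range', List.map_map]
    simp only [Function.comp_def, Nat.add_comm 1]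
  rw [hshift, up]
  refine SemiconjBy.list_prod_map _ fun i hi => ?_
  rw [List.mem_range'_1] at hi
  exact semiconjBy_down_σ ha (by omega) (by omega) hb

lemma σ_mul_down_add_one_mul_σ {a b : ℕ} (ha : 1 ≤ a) (hab : a < b) (hb : b ≤ n - 1) :
    σ n a * down n b (a + 1) * σ n a = down n b (a + 1) * (σ n a * σ n (a + 1)) := by
  have hX : Commute (σ n a) (down n b (a + 1 + 1)) :=
    commute_down fun j hj _ => commute_σ_σ (by omega)
  rw [← down_add_one_mul_σ (n := n) (show a + 1 ≤ b by omega), ← mul_assoc (σ n a), hX.eq]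
  simp only [mul_assoc, σ_braid (n := n) ha (by omega)]

lemma σ_add_one_mul_down_mul_σ_add_one {a b : ℕ} (ha : 1 ≤ a) (hab : a ≤ b) (hb : b + 1 ≤ n - 1) :
    σ n (b + 1) * down n b a * σ n (b + 1) = σ n b * σ n (b + 1) * down n b a := by
  obtain ⟨c, rfl⟩ : ∃ c, b = c + 1 := ⟨b - 1, by omega⟩
  have hY : Commute (down n c a) (σ n (c + 1 + 1)) :=
    (commute_down fun j _ hj => (commute_σ_σ (by omega)).symm).symm
  rw [← σ_mul_down (n := n) (show a ≤ c + 1 by omega), mul_assoc _ _ (σ n _), mul_assoc _ _ (σ n _),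
    hY.eq]
  simp only [← mul_assoc, σ_braid (n := n) (i := c + 1) (by omega) hb]

lemma down_pow_eq_pow_mul_up {a b k : ℕ} (ha : 1 ≤ a) (hk : a + k ≤ b) (hb : b ≤ n - 1) :
    down n b a ^ (k + 1) = down n b (a + 1) ^ (k + 1) * up n a (a + k) := by
  induction k with
  | zero => simp [up_self, down_add_one_mul_σ (n := n) (show a ≤ b by omega)]
  | succ k ih =>
    have hU : SemiconjBy (down n b (a + 1)) (up n (a + 1 + 1) (a + k + 1)) (up n (a + 1) (a + k)) :=
      semiconjBy_down_up (by omega) le_rfl (by omega) hb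
    have hσU : Commute (σ n a) (up n (a + 1 + 1) (a + k + 1)) :=
      commute_up fun j hj _ => commute_σ_σ (by omega)
    have hstep : up n a (a + k) * down n b a
        = σ n a * down n b (a + 1) * σ n a * up n (a + 1 + 1) (a + k + 1) := by
      rw [← σ_mul_up_add_one (n := n) (show a ≤ a + k by omega),
        ← down_add_one_mul_σ (n := n) (show a ≤ b by omega), mul_assoc, ← mul_assoc _ (down _ _ _),
        ← hU.eq, mul_assoc (down _ _ _), ← hσU.eq]
      simp only [mul_assoc]
    rw [pow_succ, ih (by omega), mul_assoc, hstep, σ_mul_down_add_one_mul_σ ha (by omega) hb,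
      ← add_assoc, ← σ_mul_up_add_one (n := n) (show a ≤ a + k + 1 by omega),
      ← σ_mul_up_add_one (n := n) (show a + 1 ≤ a + k + 1 by omega), pow_succ _ (k + 1)]
    simp only [mul_assoc]

lemma down_pow_eq_up_mul_pow {a b k : ℕ} (ha : 1 ≤ a) (hk : a + k ≤ b + 1) (hb : b + 1 ≤ n - 1) :
    down n (b + 1) a ^ (k + 1) = up n (b + 1 - k) (b + 1) * down n b a ^ (k + 1) := by
  induction k generalizing b with
  | zero => simp [up_self, σ_mul_down (n := n) (show a ≤ b + 1 by omega)]
  | succ k ih =>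
    obtain ⟨c, rfl⟩ : ∃ c, b = c + 1 := ⟨b - 1, by omega⟩
    have hV :
        SemiconjBy (down n (c + 1) a) (up n (c + 1 + 1 - k) (c + 1)) (up n (c + 1 - k) c) := by
      have h := semiconjBy_down_up (n := n) (a := a) (b := c + 1) (c := c + 1 - k) (d := c)
        ha (by omega) (by omega) (by omega)
      rwa [show c + 1 - k + 1 = c + 1 + 1 - k by omega] at h
    have hσV : Commute (σ n (c + 1 + 1)) (up n (c + 1 - k) c) :=
      commute_up fun j _ hj => (commute_σ_σ (by omega)).symm
    have hstep : down n (c + 1 + 1) a * up n (c + 1 + 1 - k) (c + 1 + 1)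
        = up n (c + 1 - k) c * (σ n (c + 1 + 1) * down n (c + 1) a * σ n (c + 1 + 1)) := by
      rw [← σ_mul_down (n := n) (show a ≤ c + 1 + 1 by omega),
        ← up_mul_σ_add_one (n := n) (show c + 1 + 1 - k ≤ c + 1 + 1 by omega), ← mul_assoc,
        mul_assoc _ (down _ _ _), hV.eq, ← mul_assoc, hσV.eq]
      simp only [mul_assoc]
    rw [pow_succ', ih (by omega) (by omega), ← mul_assoc, hstep,
      σ_add_one_mul_down_mul_σ_add_one ha (by omega) hb,
      show c + 1 + 1 - (k + 1) = c + 1 - k by omega,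
      ← up_mul_σ_add_one (n := n) (show c + 1 - k ≤ c + 1 + 1 by omega),
      ← up_mul_σ_add_one (n := n) (show c + 1 - k ≤ c + 1 by omega), pow_succ' _ (k + 1)]
    simp only [mul_assoc]

lemma down_pow_self {m : ℕ} (hm : m ≤ n - 1) :
    down n m 1 ^ m = up n 1 m * down n (m - 1) 1 ^ m := by
  cases m with
  | zero => simp [up_eq_one_of_lt]
  | succ m => simpa using down_pow_eq_up_mul_pow (n := n) (k := m) le_rfl (by omega) hm

lemma semiconjBy_down_pow_σ {b i : ℕ} (t : ℕ) (hi : 1 ≤ i) (h : i + t ≤ b) (hb : b ≤ n - 1) :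
    SemiconjBy (down n b 1 ^ t) (σ n (i + t)) (σ n i) := by
  induction t generalizing i with
  | zero => simp
  | succ t ih =>
    rw [pow_succ', show i + (t + 1) = i + 1 + t by omega]
    exact (semiconjBy_down_σ le_rfl hi (by omega) hb).mul_left (ih (by omega) (by omega))

lemma down_sq {b : ℕ} (hb₁ : 1 ≤ b) (hb : b + 1 ≤ n - 1) :
    down n (b + 1) 1 ^ 2 = σ n b * σ n (b + 1) * down n b 1 ^ 2 := by
  rw [sq, sq, ← σ_mul_down (n := n) (show 1 ≤ b + 1 by omega), ← mul_assoc,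
    σ_add_one_mul_down_mul_σ_add_one (a := 1) le_rfl hb₁ hb]
  simp only [mul_assoc]

lemma semiconjBy_down_sq_σ {b : ℕ} (hb₁ : 1 ≤ b) (hb : b ≤ n - 1) :
    SemiconjBy (down n b 1 ^ 2) (σ n 1) (σ n b) := by
  induction b, hb₁ using Nat.le_induction with
  | base => rw [down_self]; exact (Commute.refl _).pow_left 2
  | succ b hb₁ ih =>
    have hbraid : SemiconjBy (σ n b * σ n (b + 1)) (σ n b) (σ n (b + 1)) := by
      simp only [SemiconjBy, mul_assoc, σ_braid (n := n) hb₁ hb]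
    rw [down_sq hb₁ hb]
    exact hbraid.mul_left (ih (by omega))

lemma commute_fullTwist_σ (j : ℕ) : Commute (fullTwist n) (σ n j) := by
  by_cases hj : 1 ≤ j ∧ j ≤ n - 1
  · obtain ⟨hj₁, hj⟩ := hj
    have h₁ := semiconjBy_down_pow_σ (n := n) (n - 1 - j) hj₁ (by omega) le_rfl
    have h₂ := semiconjBy_down_sq_σ (n := n) (by omega) le_rfl
    have h₃ := semiconjBy_down_pow_σ (n := n) (j - 1) le_rfl (by omega) le_rfl
    rw [show j + (n - 1 - j) = n - 1 by omega] at h₁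
    rw [show 1 + (j - 1) = j by omega] at h₃
    rw [fullTwist, ← pow_sub_mul_pow _ (show j - 1 ≤ n by omega),
      ← pow_sub_mul_pow _ (show 2 ≤ n - (j - 1) by omega),
      show n - (j - 1) - 2 = n - 1 - j by omega]
    exact (h₁.mul_left h₂).mul_left h₃
  · simp [σ, hj]

lemma commute_fullTwist (x : BraidGroup n) : Commute (fullTwist n) x := by
  suffices x ∈ Subgroup.centralizer {fullTwist n} from
    (Subgroup.mem_centralizer_singleton_iff.1 this).symm
  refine PresentedGroup.generated_by _ _ (fun j => ?_) x
  have hj : σ n (j.val + 1) = PresentedGroup.of j := dif_pos ⟨by omega, by omega⟩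
  exact Subgroup.mem_centralizer_singleton_iff.2 (hj ▸ (commute_fullTwist_σ (j.val + 1)).eq.symm)

def bk (n k : ℕ) : BraidGroup n :=
  down n (k - 1) 1 ^ (-(k : ℤ)) * down n (n - 1) (k + 1) ^ (n - k)

lemma bk_zero : bk n 0 = fullTwist n := by
  simp [bk, fullTwist]

lemma bk_succ_mul_flip {k : ℕ} (hk : k + 1 ≤ n - 1) : bk n (k + 1) * flip n (k + 1) = bk n k := by
  have hUδ : Commute (down n (n - 1) (k + 1 + 1) ^ (n - (k + 1))) (down n k 1) :=
    (commute_down fun j _ hj => (commute_down fun i hi _ => commute_σ_σ (by omega)).symm).pow_left _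
  have hUup : Commute (down n (n - 1) (k + 1 + 1) ^ (n - (k + 1))) (up n 1 k) :=
    (commute_up fun j _ hj => (commute_down fun i hi _ => commute_σ_σ (by omega)).symm).pow_left _
  have hup : up n 1 k * up n (k + 1) (n - 1) = up n 1 (n - 1) := up_mul_up (by omega) (by omega)
  have hW : down n (n - 1) (k + 1 + 1) ^ (n - (k + 1)) * up n (k + 1) (n - 1)
      = down n (n - 1) (k + 1) ^ (n - (k + 1)) := by
    have h := down_pow_eq_pow_mul_up (n := n) (a := k + 1) (b := n - 1) (k := n - (k + 1) - 1)
      (by omega) (by omega) le_rfl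
    rw [show n - (k + 1) - 1 + 1 = n - (k + 1) by omega,
      show k + 1 + (n - (k + 1) - 1) = n - 1 by omega] at h
    exact h.symm
  simp only [bk, flip, Nat.add_sub_cancel, zpow_neg, zpow_natCast]
  calc (down n k 1 ^ (k + 1))⁻¹ * down n (n - 1) (k + 1 + 1) ^ (n - (k + 1))
        * (down n k 1 * up n 1 (n - 1) * down n (n - 1) (k + 1))
      = (down n k 1 ^ (k + 1))⁻¹ * down n k 1 * up n 1 k
        * (down n (n - 1) (k + 1 + 1) ^ (n - (k + 1)) * up n (k + 1) (n - 1))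
        * down n (n - 1) (k + 1) := by
        rw [← hup]
        simp only [← mul_assoc]
        rw [mul_assoc _ _ (down n k 1), hUδ.eq, ← mul_assoc, mul_assoc _ _ (up n 1 k), hUup.eq]
        simp only [mul_assoc]
    _ = (down n (k - 1) 1 ^ k)⁻¹ * down n (n - 1) (k + 1) ^ (n - k) := by
        rw [hW, mul_assoc _ _ (down n (n - 1) (k + 1)), ← pow_succ,
          show n - (k + 1) + 1 = n - k by omega, pow_succ', down_pow_self (by omega)]
        group

lemma flipsDown_succ (k : ℕ) : flipsDown n (k + 1) 1 = flip n (k + 1) * flipsDown n k 1 := by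
  simp [flipsDown, List.range'_1_concat, add_comm 1 k]

lemma bk_eq_fullTwist_mul_inv_flipsDown {k : ℕ} (hk : k ≤ n - 1) :
    bk n k = fullTwist n * (flipsDown n k 1)⁻¹ := by
  induction k with
  | zero => simp [bk_zero, flipsDown]
  | succ k ih =>
    rw [flipsDown_succ, mul_inv_rev, ← mul_assoc, ← ih (by omega), ← bk_succ_mul_flip hk,
      mul_inv_cancel_right]

end

theorem bk_eq_fullTwist_mul_inv_flips_general (n : ℕ) (k : ℕ) (hk2 : k ≤ n - 1) :
    down n (k - 1) 1 ^ (-(k : ℤ)) * down n (n - 1) (k + 1) ^ (n - k)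
      = fullTwist n * (flipsDown n k 1)⁻¹ ∧
    down n (k - 1) 1 ^ (-(k : ℤ)) * down n (n - 1) (k + 1) ^ (n - k)
      = (flipsDown n k 1)⁻¹ * fullTwist n := by
  have h : bk n k = fullTwist n * (flipsDown n k 1)⁻¹ := bk_eq_fullTwist_mul_inv_flipsDown hk2
  exact ⟨h, h.trans (commute_fullTwist _).eq⟩

/-- For `1 ≤ k ≤ n-1`, the element
`b_k = (σ_{k-1} ⋯ σ_2 σ_1)^{-k} (σ_{n-1} ⋯ σ_{k+2} σ_{k+1})^{n-k}` of `B_n` satisfies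
`b_k = d (r_k r_{k-1} ⋯ r_1)⁻¹ = (r_k r_{k-1} ⋯ r_1)⁻¹ d`. -/
theorem bk_eq_fullTwist_mul_inv_flips (n : ℕ) (hn : 2 ≤ n) (k : ℕ) (hk1 : 1 ≤ k)
    (hk2 : k ≤ n - 1) :
    down n (k - 1) 1 ^ (-(k : ℤ)) * down n (n - 1) (k + 1) ^ (n - k)
      = fullTwist n * (flipsDown n k 1)⁻¹ ∧
    down n (k - 1) 1 ^ (-(k : ℤ)) * down n (n - 1) (k + 1) ^ (n - k)
      = (flipsDown n k 1)⁻¹ * fullTwist n :=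
  bk_eq_fullTwist_mul_inv_flips_general n k hk2

end Braid
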